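/- arXiv:2307.08021 — 3 statements merged into one kernel-verified Lean document; each statement's English description precedes it below -/
import Mathlib

section
/- (Local dynamical Frostman lemma) Let s ≥ 0, N ∈ ℕ, f ∈ C(X_1,ℝ), and let U_i be open covers of X_i, i=1,…,k. Suppose c = W^{a,s}_{N,{U_i}}(X_1, f) > 0. Then there exists a Borel probability measure μ on X_1 such that for every n ≥ N and every element A of the cover ⋁_{i=1}^k (τ_{i−1}^{−1}U_i)_0^{⌈(a_1+…+a_i)n⌉−1}, one has μ(A) ≤ (1/c) · exp(−n s + (1/a_1) sup_{x∈A} S_{⌈a_1 n⌉} f(x)). -/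
open MeasureTheory Set Filter Topology
open scoped ENNReal symmDiff

namespace WTP

variable {k : ℕ}

/-- cumulative weight `a 1 + … + a i` (zero-indexed: `a 0 + … + a i`). -/
noncomputable def cw (a : Fin k → ℝ) (i : Fin k) : ℝ := ∑ j ∈ Finset.Iic i, a j

/-- Birkhoff sum `S_n f = ∑_{l<n} f ∘ T^l`. -/
noncomputable def birk {X : Type*} (T : X → X) (f : X → ℝ) (n : ℕ) (x : X) : ℝ :=
  ∑ l ∈ Finset.range n, f (T^[l] x)

/-- a (finite) open cover of a topological space. -/
def IsOpenCover {X : Type*} [TopologicalSpace X] (𝒰 : Set (Set X)) : Prop :=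
  𝒰.Finite ∧ (∀ U ∈ 𝒰, IsOpen U) ∧ ⋃₀ 𝒰 = Set.univ

/-- pullback of a cover along a map. -/
def pullCov {X Y : Type*} (g : X → Y) (𝒰 : Set (Set Y)) : Set (Set X) :=
  (fun U => g ⁻¹' U) '' 𝒰

/-- the quantity `exp(−s·n + (1/a₁)·sup_{x∈A} S_{⌈a₁ n⌉} f(x))`, as an element of `ℝ≥0∞`. -/
noncomputable def pterm {X : Type*} (T1 : X → X) (f : X → ℝ) (a1 s : ℝ) (n : ℕ)
    (A : Set X) : ℝ≥0∞ :=
  ENNReal.ofReal (Real.exp (-(s * n) + (1 / a1) * sSup (birk T1 f ⌈a1 * (n : ℝ)⌉₊ '' A)))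

/-- the weighted Bowen ball `B_n^𝐚(x, ε)`. -/
def wBowen {X : Fin k → Type*} [∀ i, MetricSpace (X i)] {X1 : Type*}
    (T : ∀ i, X i → X i) (τ : ∀ i, X1 → X i) (a : Fin k → ℝ)
    (n : ℕ) (x : X1) (ε : ℝ) : Set X1 :=
  {y | ∀ i : Fin k, ∀ j < ⌈cw a i * (n : ℝ)⌉₊,
      dist ((T i)^[j] (τ i x)) ((T i)^[j] (τ i y)) < ε}

section Bowen

variable [NeZero k] {X : Fin k → Type*} [∀ i, MetricSpace (X i)] {X1 : Type*}
  [MeasurableSpace X1]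

/-- `Λ^{𝐚,s}_{N,ε}(Z,f)`. -/
noncomputable def lamBowenN (T1 : X1 → X1) (T : ∀ i, X i → X i) (τ : ∀ i, X1 → X i)
    (a : Fin k → ℝ) (f : X1 → ℝ) (s ε : ℝ) (N : ℕ) (Z : Set X1) : ℝ≥0∞ :=
  ⨅ (D : Set (ℕ × Set X1)) (_ : D.Countable)
    (_ : ∀ p ∈ D, N ≤ p.1 ∧ MeasurableSet p.2 ∧ ∃ x : X1, p.2 ⊆ wBowen T τ a p.1 x ε)
    (_ : Z ⊆ ⋃ p ∈ D, p.2),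
    ∑' p : D, pterm T1 f (a 0) s p.1.1 p.1.2

/-- `Λ^{𝐚,s}_{ε}(Z,f) = lim_{N→∞} Λ^{𝐚,s}_{N,ε}(Z,f)` (an increasing limit). -/
noncomputable def lamBowen (T1 : X1 → X1) (T : ∀ i, X i → X i) (τ : ∀ i, X1 → X i)
    (a : Fin k → ℝ) (f : X1 → ℝ) (s ε : ℝ) (Z : Set X1) : ℝ≥0∞ :=
  ⨆ N : ℕ, lamBowenN T1 T τ a f s ε N Z

/-- `P^𝐚(T₁, Z, ε, f) = inf {s : Λ^{𝐚,s}_ε(Z,f) = 0}`. -/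
noncomputable def PBowenEps (T1 : X1 → X1) (T : ∀ i, X i → X i) (τ : ∀ i, X1 → X i)
    (a : Fin k → ℝ) (Z : Set X1) (f : X1 → ℝ) (ε : ℝ) : EReal :=
  sInf (Real.toEReal '' {s : ℝ | lamBowen T1 T τ a f s ε Z = 0})

/-- the 𝐚-weighted topological pressure `P^𝐚(T₁, Z, f) = lim_{ε→0} P^𝐚(T₁, Z, ε, f)`
(an increasing limit as `ε` decreases to `0`). -/
noncomputable def PBowen (T1 : X1 → X1) (T : ∀ i, X i → X i) (τ : ∀ i, X1 → X i)
    (a : Fin k → ℝ) (Z : Set X1) (f : X1 → ℝ) : EReal :=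
  ⨆ ε : {e : ℝ // 0 < e}, PBowenEps T1 T τ a Z f ε.1

/-- `W^{𝐚,s}_{N,ε}(Z,f)`. -/
noncomputable def wBowenWN (T1 : X1 → X1) (T : ∀ i, X i → X i) (τ : ∀ i, X1 → X i)
    (a : Fin k → ℝ) (f : X1 → ℝ) (s ε : ℝ) (N : ℕ) (Z : Set X1) : ℝ≥0∞ :=
  ⨅ (D : Set (ℕ × Set X1 × ℝ≥0∞)) (_ : D.Countable)
    (_ : ∀ p ∈ D, N ≤ p.1 ∧ MeasurableSet p.2.1 ∧ 0 < p.2.2 ∧ p.2.2 ≠ ⊤ ∧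
        ∃ x : X1, p.2.1 ⊆ wBowen T τ a p.1 x ε)
    (_ : ∀ z ∈ Z, 1 ≤ ∑' p : D, (p.1.2.1).indicator (fun _ => p.1.2.2) z),
    ∑' p : D, p.1.2.2 * pterm T1 f (a 0) s p.1.1 p.1.2.1

/-- `W^{𝐚,s}_{ε}(Z,f)`. -/
noncomputable def wBowenW (T1 : X1 → X1) (T : ∀ i, X i → X i) (τ : ∀ i, X1 → X i)
    (a : Fin k → ℝ) (f : X1 → ℝ) (s ε : ℝ) (Z : Set X1) : ℝ≥0∞ :=
  ⨆ N : ℕ, wBowenWN T1 T τ a f s ε N Z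

/-- `P_W^𝐚(T₁, Z, ε, f)`. -/
noncomputable def PWBowenEps (T1 : X1 → X1) (T : ∀ i, X i → X i) (τ : ∀ i, X1 → X i)
    (a : Fin k → ℝ) (Z : Set X1) (f : X1 → ℝ) (ε : ℝ) : EReal :=
  sInf (Real.toEReal '' {s : ℝ | wBowenW T1 T τ a f s ε Z = 0})

/-- the average 𝐚-weighted topological pressure `P_W^𝐚(T₁, Z, f)`. -/
noncomputable def PWBowen (T1 : X1 → X1) (T : ∀ i, X i → X i) (τ : ∀ i, X1 → X i)
    (a : Fin k → ℝ) (Z : Set X1) (f : X1 → ℝ) : EReal :=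
  ⨆ ε : {e : ℝ // 0 < e}, PWBowenEps T1 T τ a Z f ε.1

end Bowen

section Local

variable [NeZero k] {X1 : Type*} [MeasurableSpace X1]

/-- the cover `⋁_{i=1}^k (τ_{i-1}^{-1} 𝒰_i)_0^{⌈(a_1+…+a_i) n⌉ - 1}` on the first space, where
`𝒱 i` is the pulled back cover `τ_{i-1}^{-1} 𝒰_i`. -/
def jointFiber (T1 : X1 → X1) (a : Fin k → ℝ) (𝒱 : Fin k → Set (Set X1)) (n : ℕ) :
    Set (Set X1) :=
  {A | ∃ V : Fin k → ℕ → Set X1,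
      (∀ i, ∀ l < ⌈cw a i * (n : ℝ)⌉₊, V i l ∈ 𝒱 i) ∧
      A = ⋂ i : Fin k, ⋂ l ∈ Finset.range ⌈cw a i * (n : ℝ)⌉₊, (T1^[l]) ⁻¹' V i l}

/-- `Λ^{𝐚,s}_{N,{𝒰_i}}(Z,f)`. -/
noncomputable def lamLocN (T1 : X1 → X1) (a : Fin k → ℝ) (𝒱 : Fin k → Set (Set X1))
    (f : X1 → ℝ) (s : ℝ) (N : ℕ) (Z : Set X1) : ℝ≥0∞ :=
  ⨅ (D : Set (ℕ × Set X1)) (_ : D.Countable)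
    (_ : ∀ p ∈ D, N ≤ p.1 ∧ MeasurableSet p.2 ∧ ∃ A ∈ jointFiber T1 a 𝒱 p.1, p.2 ⊆ A)
    (_ : Z ⊆ ⋃ p ∈ D, p.2),
    ∑' p : D, pterm T1 f (a 0) s p.1.1 p.1.2

/-- `Λ^{𝐚,s}_{{𝒰_i}}(Z,f)`. -/
noncomputable def lamLoc (T1 : X1 → X1) (a : Fin k → ℝ) (𝒱 : Fin k → Set (Set X1))
    (f : X1 → ℝ) (s : ℝ) (Z : Set X1) : ℝ≥0∞ :=
  ⨆ N : ℕ, lamLocN T1 a 𝒱 f s N Z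

/-- the local 𝐚-weighted topological pressure `P^𝐚(T₁, Z, {𝒰_i}, f)`, expressed through the
pulled-back covers `𝒱 i = τ_{i-1}^{-1} 𝒰_i`. -/
noncomputable def PLoc (T1 : X1 → X1) (a : Fin k → ℝ) (𝒱 : Fin k → Set (Set X1))
    (Z : Set X1) (f : X1 → ℝ) : EReal :=
  sInf (Real.toEReal '' {s : ℝ | lamLoc T1 a 𝒱 f s Z = 0})

/-- `W^{𝐚,s}_{N,{𝒰_i}}(Z,f)`. -/
noncomputable def wLocN (T1 : X1 → X1) (a : Fin k → ℝ) (𝒱 : Fin k → Set (Set X1))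
    (f : X1 → ℝ) (s : ℝ) (N : ℕ) (Z : Set X1) : ℝ≥0∞ :=
  ⨅ (D : Set (ℕ × Set X1 × ℝ≥0∞)) (_ : D.Countable)
    (_ : ∀ p ∈ D, N ≤ p.1 ∧ MeasurableSet p.2.1 ∧ 0 < p.2.2 ∧ p.2.2 ≠ ⊤ ∧
        ∃ A ∈ jointFiber T1 a 𝒱 p.1, p.2.1 ⊆ A)
    (_ : ∀ z ∈ Z, 1 ≤ ∑' p : D, (p.1.2.1).indicator (fun _ => p.1.2.2) z),
    ∑' p : D, p.1.2.2 * pterm T1 f (a 0) s p.1.1 p.1.2.1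

/-- `W^{𝐚,s}_{{𝒰_i}}(Z,f)`. -/
noncomputable def wLoc (T1 : X1 → X1) (a : Fin k → ℝ) (𝒱 : Fin k → Set (Set X1))
    (f : X1 → ℝ) (s : ℝ) (Z : Set X1) : ℝ≥0∞ :=
  ⨆ N : ℕ, wLocN T1 a 𝒱 f s N Z

/-- the local average 𝐚-weighted topological pressure `P_W^𝐚(T₁, Z, {𝒰_i}, f)`. -/
noncomputable def PWLoc (T1 : X1 → X1) (a : Fin k → ℝ) (𝒱 : Fin k → Set (Set X1))
    (Z : Set X1) (f : X1 → ℝ) : EReal :=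
  sInf (Real.toEReal '' {s : ℝ | wLoc T1 a 𝒱 f s Z = 0})

end Local

/-- iterated join `(𝒰)_0^{n-1} = ⋁_{l=0}^{n-1} T^{-l} 𝒰` of a cover. -/
def covJoinT {X : Type*} (T : X → X) (𝒰 : Set (Set X)) (n : ℕ) : Set (Set X) :=
  {A | ∃ u : ℕ → Set X, (∀ l < n, u l ∈ 𝒰) ∧
      A = ⋂ l ∈ Finset.range n, (T^[l]) ⁻¹' u l}

/-- the join `⋁_{j=i}^{k} 𝒱 j` of covers of a single space (in applications
`𝒱 j = τ_{j-1}^{-1} 𝒰_j`). -/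
def joinFrom {X1 : Type*} (𝒱 : Fin k → Set (Set X1)) (i : Fin k) : Set (Set X1) :=
  {A | ∃ V : Fin k → Set X1, (∀ j, i ≤ j → V j ∈ 𝒱 j) ∧ A = ⋂ j ∈ Finset.Ici i, V j}

/-- a finite measurable partition (indexed). -/
def IsPart {X : Type*} [MeasurableSpace X] {ι : Type*} (β : ι → Set X) : Prop :=
  (∀ i, MeasurableSet (β i)) ∧ (∀ i j, i ≠ j → Disjoint (β i) (β j)) ∧ ⋃ i, β i = Set.univ

/-- the static entropy `H_μ(β) = -∑ μ(B) log μ(B)` of a finite (indexed) partition. -/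
noncomputable def entH {X : Type*} [MeasurableSpace X] {ι : Type*} [Fintype ι]
    (μ : Measure X) (β : ι → Set X) : ℝ :=
  ∑ i, Real.negMulLog (μ (β i)).toReal

/-- the dynamical join `⋁_{l=0}^{n-1} T^{-l} β` of a partition. -/
def dynJoin {X : Type*} (T : X → X) {ι : Type*} (β : ι → Set X) (n : ℕ) :
    (Fin n → ι) → Set X :=
  fun c => ⋂ l : Fin n, (T^[(l : ℕ)]) ⁻¹' β (c l)

/-- the measure-theoretic entropy `h_μ(T, β) = lim_n (1/n) H_μ(⋁_{l<n} T^{-l}β)` of `T`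
relative to a finite partition. -/
noncomputable def hPart {X : Type*} [MeasurableSpace X] {ι : Type*} [Fintype ι]
    (μ : Measure X) (T : X → X) (β : ι → Set X) : EReal :=
  Filter.liminf (fun n : ℕ => ((entH μ (dynJoin T β n) / n : ℝ) : EReal)) Filter.atTop

/-- the Kolmogorov–Sinai entropy `h_μ(T)`. -/
noncomputable def hKS {X : Type*} [MeasurableSpace X] (μ : Measure X) (T : X → X) : EReal :=
  ⨆ p : (Σ m : ℕ, {β : Fin m → Set X // IsPart β}), hPart μ T p.2.1

/-- `H_μ(𝒰) = inf {H_μ(β) : β a finite measurable partition refining 𝒰}`. -/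
noncomputable def covH {X : Type*} [MeasurableSpace X] (μ : Measure X)
    (𝒰 : Set (Set X)) : ℝ :=
  sInf {h : ℝ | ∃ (m : ℕ) (β : Fin m → Set X), IsPart β ∧
      (∀ i, ∃ U ∈ 𝒰, β i ⊆ U) ∧ h = entH μ β}

/-- the local measure-theoretic entropy `h_μ(T, 𝒰) = lim_n (1/n) H_μ((𝒰)_0^{n-1})` of `T`
relative to an open cover. -/
noncomputable def hCov {X : Type*} [MeasurableSpace X] (μ : Measure X) (T : X → X)
    (𝒰 : Set (Set X)) : EReal :=
  Filter.liminf (fun n : ℕ => ((covH μ (covJoinT T 𝒰 n) / n : ℝ) : EReal)) Filter.atTop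

/-- `h⁺_μ(T,𝒰) = inf {h_μ(T,β) : β a finite measurable partition refining 𝒰}`. -/
noncomputable def hCovPlus {X : Type*} [MeasurableSpace X] (μ : Measure X) (T : X → X)
    (𝒰 : Set (Set X)) : EReal :=
  ⨅ p : (Σ m : ℕ, {β : Fin m → Set X // IsPart β ∧ ∀ i, ∃ U ∈ 𝒰, β i ⊆ U}),
    hPart μ T p.2.1

/-- the join `⋁_{j=i}^{k} γ j` of partitions of a single space (in applications
`γ j = τ_{j-1}^{-1} α_j`). -/
def partJoinFrom {X1 : Type*} {ι : Fin k → Type*} (γ : ∀ j, ι j → Set X1) (i : Fin k) :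
    (∀ j : {j : Fin k // i ≤ j}, ι j) → Set X1 :=
  fun c => ⋂ j : {j : Fin k // i ≤ j}, γ j (c j)

/-- the partition `⋁_{i=1}^k (γ_i)_0^{⌈(a_1+…+a_i)N⌉-1}` on the first space, where
`γ i = τ_{i-1}^{-1} α_i`. -/
def bigPartJoin {X1 : Type*} (T1 : X1 → X1) (a : Fin k → ℝ) {ι : Fin k → Type*}
    (γ : ∀ i, ι i → Set X1) (N : ℕ) :
    (∀ i : Fin k, Fin ⌈cw a i * (N : ℝ)⌉₊ → ι i) → Set X1 :=
  fun c => ⋂ i : Fin k, ⋂ l : Fin ⌈cw a i * (N : ℝ)⌉₊, (T1^[(l : ℕ)]) ⁻¹' γ i (c i l)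

/-- conditional entropy `H_μ(γ|β) = H_μ(γ ∨ β) - H_μ(β)`. -/
noncomputable def condEnt {X : Type*} [MeasurableSpace X] {ι κ : Type*} [Fintype ι] [Fintype κ]
    (μ : Measure X) (γ : ι → Set X) (β : κ → Set X) : ℝ :=
  entH μ (fun p : ι × κ => γ p.1 ∩ β p.2) - entH μ β

/-- the oscillation `w_f(⋁_{i=1}^k τ_{i-1}^{-1} 𝒰_i)` of `f` on the joined cover, where
`𝒱 i = τ_{i-1}^{-1} 𝒰_i`. -/
noncomputable def wfJoin {X1 : Type*} (f : X1 → ℝ) (𝒱 : Fin k → Set (Set X1)) : ℝ :=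
  sSup {d : ℝ | ∃ V : Fin k → Set X1, (∀ i, V i ∈ 𝒱 i) ∧
      ∃ x ∈ ⋂ i, V i, ∃ y ∈ ⋂ i, V i, d = |f x - f y|}

/-- the topological support of a measure. -/
def msupp {X : Type*} [TopologicalSpace X] [MeasurableSpace X] (μ : Measure X) : Set X :=
  {x | ∀ U : Set X, IsOpen U → x ∈ U → 0 < μ U}

end WTP

/-!
For open sets `E i` with weights `w i ≥ 0`, let `coverCost E w g` be the infimum of `∑ t i * w i`
over finite nonnegative weightings with `g ≤ ∑ t i • 𝟙_{E i}`. On `C(X)` of a compact space this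
is a sublinear functional, so Hahn–Banach gives a linear `Λ ≤ coverCost E w` with
`Λ 1 = coverCost E w 1`; `Λ` is positive since `coverCost E w g ≤ 0` for `g ≤ 0`. By inner
regularity and Urysohn, its Riesz measure gives each `E i` mass at most
`coverCost E w 𝟙_{E i} ≤ w i`, and normalising it by `coverCost E w 1` gives the probability
measure. Taking for `E` the elements of the joint covers `⋁ᵢ (τᵢ₋₁⁻¹ 𝒰ᵢ)_0^{⌈(a₁+…+aᵢ)n⌉-1}`,
`n ≥ N`, weighted by `exp(−ns + (1/a₁) sup_A S_{⌈a₁n⌉} f)`, finite weightings are among the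
countable ones defining `W^{𝐚,s}_{N,{𝒰ᵢ}}(X₁, f)`, so `W ≤ coverCost E w 1`.
-/

open scoped CompactlySupported

theorem exists_linearMap_le_sublinear_eq {E : Type*} [AddCommGroup E] [Module ℝ E] (N : E → ℝ)
    (N_hom : ∀ c : ℝ, 0 < c → ∀ x, N (c • x) = c * N x) (N_add : ∀ x y, N (x + y) ≤ N x + N y)
    (x : E) : ∃ L : E →ₗ[ℝ] ℝ, (∀ y, L y ≤ N y) ∧ L x = N x := by
  have N_zero : N 0 = 0 := by
    have := N_hom 2 two_pos 0
    rw [smul_zero] at this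
    linarith
  have hx : ∀ c : ℝ, c • x = 0 → c • N x = 0 := by
    intro c hc
    rcases eq_or_ne c 0 with rfl | hc0
    · simp
    · rw [(smul_eq_zero.mp hc).resolve_left hc0, N_zero, smul_zero]
  set f : E →ₗ.[ℝ] ℝ := LinearPMap.mkSpanSingleton' x (N x) hx
  have hfN : ∀ y : f.domain, f y ≤ N y := by
    rintro ⟨y, hy⟩
    obtain ⟨c, rfl⟩ := Submodule.mem_span_singleton.mp hy
    rw [LinearPMap.mkSpanSingleton'_apply, RingHom.id_apply, smul_eq_mul]
    rcases lt_trichotomy c 0 with hc | rfl | hc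
    · have := N_add (c • x) ((-c) • x)
      rw [← add_smul, add_neg_cancel, zero_smul, N_zero, N_hom _ (neg_pos.mpr hc)] at this
      linarith
    · simp [N_zero]
    · exact (N_hom c hc x).ge
  obtain ⟨L, hLf, hLN⟩ := exists_extension_of_le_sublinear f N N_hom N_add hfN
  refine ⟨L, hLN, ?_⟩
  rw [hLf ⟨x, Submodule.mem_span_singleton_self x⟩]
  exact LinearPMap.mkSpanSingleton'_apply_self _ _ _ _

namespace RealRMK

theorem rieszMeasure_le_of_isOpen {X : Type*} [TopologicalSpace X] [T2Space X]
    [LocallyCompactSpace X] [MeasurableSpace X] [BorelSpace X] (Λ : C_c(X, ℝ) →ₚ[ℝ] ℝ)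
    {U : Set X} (hU : IsOpen U) {b : ℝ}
    (hb : ∀ g : C_c(X, ℝ), (∀ x, g x ∈ Icc 0 1) → EqOn g 0 Uᶜ → Λ g ≤ b) :
    rieszMeasure Λ U ≤ ENNReal.ofReal b := by
  rw [hU.measure_eq_iSup_isCompact]
  refine iSup₂_le fun K hKU => iSup_le fun hK => ?_
  obtain ⟨g, hgK, hgU, hgc, hg01⟩ := exists_continuous_one_zero_of_isCompact hK hU.isClosed_compl
    (disjoint_compl_right_iff_subset.mpr hKU)
  calc rieszMeasure Λ K ≤ ENNReal.ofReal (Λ ⟨g, hgc⟩) :=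
        rieszMeasure_le_of_eq_one Λ (fun x => (hg01 x).1) hK hgK
    _ ≤ ENNReal.ofReal b := ENNReal.ofReal_le_ofReal (hb _ hg01 hgU)

end RealRMK

lemma ENNReal.ofReal_linearCombination {ι : Type*} {v : ι → ℝ} (hv : 0 ≤ v) {t : ι →₀ ℝ}
    (ht : ∀ i, 0 ≤ t i) :
    ENNReal.ofReal (Finsupp.linearCombination ℝ v t) =
      ∑ i ∈ t.support, ENNReal.ofReal (t i) * ENNReal.ofReal (v i) := by
  simp_rw [Finsupp.linearCombination_apply, Finsupp.sum, smul_eq_mul]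
  rw [ENNReal.ofReal_sum_of_nonneg fun i _ => mul_nonneg (ht i) (hv i)]
  simp_rw [ENNReal.ofReal_mul (ht _)]

section CoverCost

open scoped Pointwise

variable {X ι : Type*}

def coverCosts (E : ι → Set X) (w : ι → ℝ) (g : X → ℝ) : Set ℝ :=
  {r | ∃ t : ι →₀ ℝ, (∀ i, 0 ≤ t i) ∧
    (∀ x, g x ≤ Finsupp.linearCombination ℝ (fun i => (E i).indicator 1 x) t) ∧
    Finsupp.linearCombination ℝ w t = r}

noncomputable def coverCost (E : ι → Set X) (w : ι → ℝ) (g : X → ℝ) : ℝ :=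
  sInf (coverCosts E w g)

variable {E : ι → Set X} {w : ι → ℝ} {g g₁ g₂ : X → ℝ}

lemma nonneg_of_mem_coverCosts (hw : 0 ≤ w) {r : ℝ} (hr : r ∈ coverCosts E w g) : 0 ≤ r := by
  obtain ⟨t, ht, -, rfl⟩ := hr
  rw [Finsupp.linearCombination_apply]
  exact Finsupp.sum_nonneg fun i _ => mul_nonneg (ht i) (hw i)

lemma bddBelow_coverCosts (hw : 0 ≤ w) : BddBelow (coverCosts E w g) :=
  ⟨0, fun _ => nonneg_of_mem_coverCosts hw⟩

lemma coverCost_nonneg (hw : 0 ≤ w) : 0 ≤ coverCost E w g :=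
  Real.sInf_nonneg fun _ => nonneg_of_mem_coverCosts hw

lemma coverCost_nonpos (hw : 0 ≤ w) (hg : g ≤ 0) : coverCost E w g ≤ 0 :=
  csInf_le (bddBelow_coverCosts hw) ⟨0, fun _ => le_rfl, fun x => by simpa using hg x, map_zero _⟩

lemma coverCost_le_of_le_indicator (hw : 0 ≤ w) (i : ι) (hg : g ≤ (E i).indicator 1) :
    coverCost E w g ≤ w i :=
  csInf_le (bddBelow_coverCosts hw)
    ⟨Finsupp.single i 1, fun j => Finsupp.single_nonneg.mpr zero_le_one j,
      fun x => by simpa using hg x, by simp⟩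

lemma add_coverCosts_subset : coverCosts E w g₁ + coverCosts E w g₂ ⊆ coverCosts E w (g₁ + g₂) := by
  rintro _ ⟨_, ⟨t₁, ht₁, hg₁, rfl⟩, _, ⟨t₂, ht₂, hg₂, rfl⟩, rfl⟩
  exact ⟨t₁ + t₂, fun i => add_nonneg (ht₁ i) (ht₂ i),
    fun x => by simpa only [map_add, Pi.add_apply] using add_le_add (hg₁ x) (hg₂ x), map_add _ _ _⟩

lemma coverCosts_smul {c : ℝ} (hc : 0 < c) : coverCosts E w (c • g) = c • coverCosts E w g := by
  ext r
  constructor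
  · rintro ⟨t, ht, hg, rfl⟩
    refine ⟨Finsupp.linearCombination ℝ w (c⁻¹ • t),
      ⟨c⁻¹ • t, fun i => smul_nonneg (inv_nonneg.mpr hc.le) (ht i), fun x => ?_, rfl⟩, ?_⟩
    · rw [map_smul, smul_eq_mul, le_inv_mul_iff₀ hc]
      exact hg x
    · simp only [map_smul]
      exact smul_inv_smul₀ hc.ne' _
  · rintro ⟨_, ⟨t, ht, hg, rfl⟩, rfl⟩
    exact ⟨c • t, fun i => smul_nonneg hc.le (ht i),
      fun x => by simpa [map_smul] using mul_le_mul_of_nonneg_left (hg x) hc.le, map_smul _ _ _⟩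

lemma coverCost_smul {c : ℝ} (hc : 0 < c) : coverCost E w (c • g) = c * coverCost E w g := by
  rw [coverCost, coverCosts_smul hc, Real.sInf_smul_of_nonneg hc.le, smul_eq_mul, coverCost]

lemma coverCost_add_le (hw : 0 ≤ w) (h₁ : (coverCosts E w g₁).Nonempty)
    (h₂ : (coverCosts E w g₂).Nonempty) :
    coverCost E w (g₁ + g₂) ≤ coverCost E w g₁ + coverCost E w g₂ := by
  unfold coverCost
  rw [← csInf_add h₁ (bddBelow_coverCosts hw) h₂ (bddBelow_coverCosts hw)]
  exact csInf_le_csInf (bddBelow_coverCosts hw) (h₁.add h₂) add_coverCosts_subset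

/-- A constant multiple of a finite subcover dominates any function bounded above. -/
lemma coverCosts_nonempty [TopologicalSpace X] [CompactSpace X] (hEo : ∀ i, IsOpen (E i))
    (hEc : ⋃ i, E i = univ) (hg : BddAbove (range g)) : (coverCosts E w g).Nonempty := by
  obtain ⟨P, hP⟩ := isCompact_univ.elim_finite_subcover E hEo hEc.ge
  obtain ⟨M, hM⟩ := hg
  have hM0 : 0 ≤ max M 0 := le_max_right _ _
  refine ⟨_, ∑ i ∈ P, Finsupp.single i (max M 0), fun j => ?_, fun x => ?_, rfl⟩
  · rw [Finsupp.finsetSum_apply]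
    exact Finset.sum_nonneg fun i _ => Finsupp.single_nonneg.mpr hM0 j
  · obtain ⟨i, hiP, hxi⟩ := mem_iUnion₂.mp (hP (mem_univ x))
    simp only [map_sum, Finsupp.linearCombination_single, smul_eq_mul]
    calc g x ≤ max M 0 * (E i).indicator 1 x := by
          simpa [hxi] using (hM (mem_range_self x)).trans (le_max_left M 0)
      _ ≤ ∑ j ∈ P, max M 0 * (E j).indicator 1 x :=
          Finset.single_le_sum (f := fun j => max M 0 * (E j).indicator 1 x)
            (fun j _ => mul_nonneg hM0 (indicator_nonneg (fun _ _ => zero_le_one) x)) hiP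

section Compact

variable [TopologicalSpace X] [CompactSpace X]

theorem exists_positiveLinearMap_le_coverCost (hEo : ∀ i, IsOpen (E i))
    (hEc : ⋃ i, E i = univ) (hw : 0 ≤ w) :
    ∃ Λ : C_c(X, ℝ) →ₚ[ℝ] ℝ, (∀ g, Λ g ≤ coverCost E w g) ∧
      Λ (CompactlySupportedContinuousMap.continuousMapEquiv 1) = coverCost E w 1 := by
  have hne (g : C_c(X, ℝ)) : (coverCosts E w g).Nonempty :=
    coverCosts_nonempty hEo hEc (isCompact_range g.continuous).bddAbove
  obtain ⟨L, hL, hL1⟩ := exists_linearMap_le_sublinear_eq (fun g : C_c(X, ℝ) => coverCost E w g)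
    (fun c hc g => by simpa only [CompactlySupportedContinuousMap.coe_smul] using coverCost_smul hc)
    (fun g₁ g₂ => by
      simpa only [CompactlySupportedContinuousMap.coe_add] using
        coverCost_add_le hw (hne g₁) (hne g₂))
    (CompactlySupportedContinuousMap.continuousMapEquiv 1)
  refine ⟨PositiveLinearMap.mk₀ L fun g hg => ?_, hL, hL1⟩
  have hneg := (hL (-g)).trans (coverCost_nonpos hw fun x => neg_nonpos.mpr (hg x))
  rw [map_neg] at hneg
  exact neg_nonpos.mp hneg

theorem exists_isProbabilityMeasure_le_coverCost [T2Space X] [MeasurableSpace X] [BorelSpace X]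
    (hEo : ∀ i, IsOpen (E i)) (hEc : ⋃ i, E i = univ) (hw : 0 ≤ w)
    (hpos : 0 < coverCost E w 1) :
    ∃ μ : Measure X, IsProbabilityMeasure μ ∧
      ∀ i, μ (E i) ≤ (ENNReal.ofReal (coverCost E w 1))⁻¹ * ENNReal.ofReal (w i) := by
  obtain ⟨Λ, hΛ, hΛ1⟩ := exists_positiveLinearMap_le_coverCost hEo hEc hw
  have huniv : RealRMK.rieszMeasure Λ univ = ENNReal.ofReal (coverCost E w 1) := by
    rw [← hΛ1]
    exact le_antisymm
      (RealRMK.rieszMeasure_le_of_eq_one Λ (by simp) isCompact_univ (by simp))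
      (RealRMK.le_rieszMeasure_tsupport_subset Λ (by simp) (subset_univ _))
  refine ⟨(ENNReal.ofReal (coverCost E w 1))⁻¹ • RealRMK.rieszMeasure Λ, ⟨?_⟩, fun i => ?_⟩
  · rw [Measure.smul_apply, huniv, smul_eq_mul,
      ENNReal.inv_mul_cancel (ENNReal.ofReal_pos.mpr hpos).ne' ENNReal.ofReal_ne_top]
  · rw [Measure.smul_apply, smul_eq_mul]
    gcongr
    refine RealRMK.rieszMeasure_le_of_isOpen Λ (hEo i) fun g hg hgE =>
      (hΛ g).trans (coverCost_le_of_le_indicator hw i fun x => ?_)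
    by_cases hx : x ∈ E i
    · simpa [hx] using (hg x).2
    · simp [hx, hgE hx]

end Compact

end CoverCost

namespace WTP

lemma pterm_ne_top {X : Type*} {T1 : X → X} {f : X → ℝ} {a1 s : ℝ} {n : ℕ} {A : Set X} :
    pterm T1 f a1 s n A ≠ ⊤ :=
  ENNReal.ofReal_ne_top

lemma isOpen_of_mem_pullCov {X Y : Type*} [TopologicalSpace X] [TopologicalSpace Y] {g : X → Y}
    (hg : Continuous g) {𝒰 : Set (Set Y)} (h𝒰 : ∀ U ∈ 𝒰, IsOpen U) :
    ∀ V ∈ pullCov g 𝒰, IsOpen V := by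
  rintro _ ⟨U, hU, rfl⟩
  exact (h𝒰 U hU).preimage hg

lemma sUnion_pullCov {X Y : Type*} (g : X → Y) (𝒰 : Set (Set Y)) :
    ⋃₀ pullCov g 𝒰 = g ⁻¹' ⋃₀ 𝒰 := by
  rw [pullCov, sUnion_image, preimage_sUnion]

section JointFiber

variable {k : ℕ} {X1 : Type*} {T1 : X1 → X1} {a : Fin k → ℝ} {𝒱 : Fin k → Set (Set X1)}

lemma jointFiber_isOpen [TopologicalSpace X1] (hT1 : Continuous T1)
    (h𝒱o : ∀ i, ∀ V ∈ 𝒱 i, IsOpen V) {n : ℕ} {A : Set X1} (hA : A ∈ jointFiber T1 a 𝒱 n) :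
    IsOpen A := by
  obtain ⟨V, hV, rfl⟩ := hA
  exact isOpen_iInter_of_finite fun i => isOpen_biInter_finset fun l hl =>
    (h𝒱o i _ (hV i l (Finset.mem_range.mp hl))).preimage (hT1.iterate l)

lemma exists_mem_jointFiber (h𝒱c : ∀ i, ⋃₀ 𝒱 i = univ) (n : ℕ) (z : X1) :
    ∃ A ∈ jointFiber T1 a 𝒱 n, z ∈ A := by
  have h (i : Fin k) (l : ℕ) : ∃ V ∈ 𝒱 i, T1^[l] z ∈ V := by
    simpa only [← mem_sUnion, h𝒱c i] using mem_univ _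
  choose V hV hzV using h
  exact ⟨_, ⟨V, fun i l _ => hV i l, rfl⟩,
    mem_iInter.mpr fun i => mem_iInter₂.mpr fun l _ => hzV i l⟩

variable [NeZero k] [MeasurableSpace X1] {f : X1 → ℝ} {s : ℝ} {N : ℕ}

lemma wLocN_le {Z : Set X1} {D : Set (ℕ × Set X1 × ℝ≥0∞)} (hD : D.Countable)
    (hadm : ∀ p ∈ D, N ≤ p.1 ∧ MeasurableSet p.2.1 ∧ 0 < p.2.2 ∧ p.2.2 ≠ ⊤ ∧
        ∃ A ∈ jointFiber T1 a 𝒱 p.1, p.2.1 ⊆ A)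
    (hcov : ∀ z ∈ Z, 1 ≤ ∑' p : D, (p.1.2.1).indicator (fun _ => p.1.2.2) z) :
    wLocN T1 a 𝒱 f s N Z ≤ ∑' p : D, p.1.2.2 * pterm T1 f (a 0) s p.1.1 p.1.2.1 :=
  iInf_le_of_le D <| iInf_le_of_le hD <| iInf_le_of_le hadm <| iInf_le _ hcov

def jointFibersFrom (T1 : X1 → X1) (a : Fin k → ℝ) (𝒱 : Fin k → Set (Set X1)) (N : ℕ) :
    Set (ℕ × Set X1) :=
  {p | N ≤ p.1 ∧ p.2 ∈ jointFiber T1 a 𝒱 p.1}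

variable [TopologicalSpace X1] [OpensMeasurableSpace X1]

lemma wLocN_le_ofReal_of_mem_coverCosts (hT1 : Continuous T1) (h𝒱o : ∀ i, ∀ V ∈ 𝒱 i, IsOpen V)
    {r : ℝ} (hr : r ∈ coverCosts (fun p : jointFibersFrom T1 a 𝒱 N => p.1.2)
      (fun p => (pterm T1 f (a 0) s p.1.1 p.1.2).toReal) 1) :
    wLocN T1 a 𝒱 f s N univ ≤ ENNReal.ofReal r := by
  obtain ⟨t, ht, hcov, rfl⟩ := hr
  set φ : jointFibersFrom T1 a 𝒱 N → ℕ × Set X1 × ℝ≥0∞ :=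
    fun p => (p.1.1, p.1.2, ENNReal.ofReal (t p))
  have hφ : φ.Injective := by
    intro p q h
    simp only [φ, Prod.mk.injEq] at h
    exact Subtype.ext (Prod.ext h.1 h.2.1)
  have htsum (F : ℕ × Set X1 × ℝ≥0∞ → ℝ≥0∞) :
      ∑' q : φ '' t.support, F q = ∑ p ∈ t.support, F (φ p) := by
    rw [tsum_image F hφ.injOn]
    exact Finset.tsum_subtype t.support (fun p => F (φ p))
  refine (wLocN_le ((t.support.countable_toSet).image φ) ?_ fun z _ => ?_).trans_eq ?_
  · rintro _ ⟨p, hp, rfl⟩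
    exact ⟨p.2.1, (jointFiber_isOpen hT1 h𝒱o p.2.2).measurableSet,
      ENNReal.ofReal_pos.mpr ((ht p).lt_of_ne (Ne.symm (Finsupp.mem_support_iff.mp hp))),
      ENNReal.ofReal_ne_top, p.1.2, p.2.2, subset_rfl⟩
  · rw [htsum fun q => q.2.1.indicator (fun _ => q.2.2) z]
    calc (1 : ℝ≥0∞) ≤ ENNReal.ofReal (Finsupp.linearCombination ℝ
          (fun p : jointFibersFrom T1 a 𝒱 N => p.1.2.indicator 1 z) t) := by
          simpa using ENNReal.ofReal_le_ofReal (hcov z)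
      _ = _ := by
          rw [ENNReal.ofReal_linearCombination (v := fun p => p.1.2.indicator 1 z)
            (fun p => indicator_nonneg (fun _ _ => zero_le_one) z) ht]
          refine Finset.sum_congr rfl fun p _ => ?_
          by_cases hz : z ∈ p.1.2 <;> simp [φ, hz]
  · rw [htsum fun q => q.2.2 * pterm T1 f (a 0) s q.1 q.2.1,
      ENNReal.ofReal_linearCombination (fun p => ENNReal.toReal_nonneg) ht]
    simp only [φ, ENNReal.ofReal_toReal pterm_ne_top]

lemma wLocN_le_ofReal_coverCost (hT1 : Continuous T1) (h𝒱o : ∀ i, ∀ V ∈ 𝒱 i, IsOpen V)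
    (hne : (coverCosts (fun p : jointFibersFrom T1 a 𝒱 N => p.1.2)
      (fun p => (pterm T1 f (a 0) s p.1.1 p.1.2).toReal) 1).Nonempty) :
    wLocN T1 a 𝒱 f s N univ ≤ ENNReal.ofReal (coverCost (fun p : jointFibersFrom T1 a 𝒱 N => p.1.2)
      (fun p => (pterm T1 f (a 0) s p.1.1 p.1.2).toReal) 1) := by
  obtain ⟨r, hr⟩ := hne
  have hfin := ne_top_of_le_ne_top ENNReal.ofReal_ne_top
    (wLocN_le_ofReal_of_mem_coverCosts hT1 h𝒱o hr)
  rw [ENNReal.le_ofReal_iff_toReal_le hfin (coverCost_nonneg fun _ => ENNReal.toReal_nonneg)]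
  exact le_csInf ⟨r, hr⟩ fun r hr => ENNReal.toReal_le_of_le_ofReal
    (nonneg_of_mem_coverCosts (fun _ => ENNReal.toReal_nonneg) hr)
    (wLocN_le_ofReal_of_mem_coverCosts hT1 h𝒱o hr)

theorem exists_isProbabilityMeasure_le_inv_wLocN_mul [T2Space X1] [CompactSpace X1]
    [BorelSpace X1] (hT1 : Continuous T1) (h𝒱o : ∀ i, ∀ V ∈ 𝒱 i, IsOpen V)
    (h𝒱c : ∀ i, ⋃₀ 𝒱 i = univ) (hc : 0 < wLocN T1 a 𝒱 f s N univ) :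
    ∃ μ : Measure X1, IsProbabilityMeasure μ ∧ ∀ n, N ≤ n → ∀ A ∈ jointFiber T1 a 𝒱 n,
      μ A ≤ (wLocN T1 a 𝒱 f s N univ)⁻¹ * pterm T1 f (a 0) s n A := by
  set E : jointFibersFrom T1 a 𝒱 N → Set X1 := fun p => p.1.2
  set w : jointFibersFrom T1 a 𝒱 N → ℝ := fun p => (pterm T1 f (a 0) s p.1.1 p.1.2).toReal
  have hEo (p : jointFibersFrom T1 a 𝒱 N) : IsOpen (E p) := jointFiber_isOpen hT1 h𝒱o p.2.2
  have hEc : ⋃ p, E p = univ := eq_univ_of_forall fun z => by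
    obtain ⟨A, hA, hz⟩ := exists_mem_jointFiber h𝒱c N z
    exact mem_iUnion.mpr ⟨⟨(N, A), le_rfl, hA⟩, hz⟩
  have hw : 0 ≤ w := fun _ => ENNReal.toReal_nonneg
  have hcW : wLocN T1 a 𝒱 f s N univ ≤ ENNReal.ofReal (coverCost E w 1) :=
    wLocN_le_ofReal_coverCost hT1 h𝒱o
      (coverCosts_nonempty hEo hEc ⟨1, by rintro _ ⟨x, rfl⟩; simp⟩)
  obtain ⟨μ, hμ, hμE⟩ := exists_isProbabilityMeasure_le_coverCost hEo hEc hw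
    (ENNReal.ofReal_pos.mp (hc.trans_le hcW))
  refine ⟨μ, hμ, fun n hn A hA => ?_⟩
  have hnA : (n, A) ∈ jointFibersFrom T1 a 𝒱 N := ⟨hn, hA⟩
  exact (hμE ⟨(n, A), hnA⟩).trans
    (mul_le_mul' (ENNReal.inv_le_inv.mpr hcW) (ENNReal.ofReal_toReal pterm_ne_top).le)

end JointFiber

theorem local_dynamical_frostman_general
    {k : ℕ} [NeZero k]
    (X : Fin k → Type) [∀ i, MetricSpace (X i)] [∀ i, CompactSpace (X i)]
    [∀ i, MeasurableSpace (X i)] [∀ i, BorelSpace (X i)]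
    (T : ∀ i, X i → X i) (hT : ∀ i, Continuous (T i))
    (τ : ∀ i, X 0 → X i)
    (hτc : ∀ i, Continuous (τ i))
    (a : Fin k → ℝ)
    (𝒰 : ∀ i, Set (Set (X i))) (h𝒰 : ∀ i, IsOpenCover (𝒰 i))
    (f : X 0 → ℝ) (s : ℝ) (N : ℕ)
    (hc : 0 < wLocN (T 0) a (fun i => pullCov (τ i) (𝒰 i)) f s N Set.univ) :
    ∃ μ : Measure (X 0), IsProbabilityMeasure μ ∧
      ∀ n : ℕ, N ≤ n →
        ∀ A ∈ jointFiber (T 0) a (fun i => pullCov (τ i) (𝒰 i)) n,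
          μ A ≤ (wLocN (T 0) a (fun i => pullCov (τ i) (𝒰 i)) f s N Set.univ)⁻¹ *
            pterm (T 0) f (a 0) s n A :=
  exists_isProbabilityMeasure_le_inv_wLocN_mul (hT 0)
    (fun i => isOpen_of_mem_pullCov (hτc i) (h𝒰 i).2.1)
    (fun i => by rw [sUnion_pullCov, (h𝒰 i).2.2, preimage_univ]) hc

/-- (local dynamical Frostman lemma) If
`c = W^{𝐚,s}_{N,{𝒰_i}}(X₁, f) > 0`, then there is a Borel probability measure `μ` on `X₁`
such that `μ(A) ≤ (1/c)·exp(−ns + (1/a₁) sup_{x∈A} S_{⌈a₁n⌉} f(x))` for every `n ≥ N` and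
every element `A` of the cover `⋁_{i=1}^k (τ_{i-1}^{-1}𝒰_i)_0^{⌈(a_1+…+a_i)n⌉-1}`. -/
theorem local_dynamical_frostman
    {k : ℕ} [NeZero k]
    (X : Fin k → Type) [∀ i, MetricSpace (X i)] [∀ i, CompactSpace (X i)]
    [∀ i, MeasurableSpace (X i)] [∀ i, BorelSpace (X i)]
    (T : ∀ i, X i → X i) (hT : ∀ i, Continuous (T i))
    (τ : ∀ i, X 0 → X i) (hτ0 : τ 0 = id)
    (hτc : ∀ i, Continuous (τ i)) (hτs : ∀ i, Function.Surjective (τ i))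
    (hτe : ∀ i, τ i ∘ T 0 = T i ∘ τ i)
    (hchain : ∀ i j : Fin k, i ≤ j → ∃ p : X i → X j,
        Continuous p ∧ p ∘ T i = T j ∘ p ∧ p ∘ τ i = τ j)
    (a : Fin k → ℝ) (ha1 : 0 < a 0) (ha : ∀ i, 0 ≤ a i)
    (𝒰 : ∀ i, Set (Set (X i))) (h𝒰 : ∀ i, IsOpenCover (𝒰 i))
    (f : X 0 → ℝ) (hf : Continuous f) (s : ℝ) (hs : 0 ≤ s) (N : ℕ)
    (hc : 0 < wLocN (T 0) a (fun i => pullCov (τ i) (𝒰 i)) f s N Set.univ) :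
    ∃ μ : Measure (X 0), IsProbabilityMeasure μ ∧
      ∀ n : ℕ, N ≤ n →
        ∀ A ∈ jointFiber (T 0) a (fun i => pullCov (τ i) (𝒰 i)) n,
          μ A ≤ (wLocN (T 0) a (fun i => pullCov (τ i) (𝒰 i)) f s N Set.univ)⁻¹ *
            pterm (T 0) f (a 0) s n A :=
  local_dynamical_frostman_general X T hT τ hτc a 𝒰 h𝒰 f s N hc

end WTP
end

section
/- Let π: (X,T) → (Y,S) be a factor map between TDSs, μ ∈ M(X,T), α = {A_1, A_2, …, A_k} a finite Borel partition of Y, and ε > 0. Then there exists an open cover U of Y with k elements such that for any j ≥ 0 and any finite Borel partition β of X refining T^{−j}π^{−1}U, one has H_μ(T^{−j}π^{−1}α | β) < ε. -/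
/-!
Approximate each `A_i` from outside by an open `U_i` with `π_*μ (U_i \ A_i)` small (outer
regularity). If `β` refines `T^{-j}π^{-1}𝒰`, send each cell `B` of `β` to an index `i` with
`B ⊆ T^{-j}π^{-1}U_i`; the cells then lie in `T^{-j}π^{-1}A_i` up to a set of total measure at most
`π_*μ (⋃ i, U_i \ A_i)`, whatever `j` is, because `μ` is `T`-invariant. Fano's inequality bounds
`H_μ(T^{-j}π^{-1}α | β)` by the `m`-ary entropy of that error, which tends to `0` with it.
-/

open MeasureTheory Set Filter Topology
open scoped ENNReal symmDiff

namespace WTP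

variable {k : ℕ}

section

open Function Real

theorem sum_negMulLog_le_negMulLog_sum_add_mul_log_card {ι : Type*} (s : Finset ι) {p : ι → ℝ}
    (hp : ∀ l ∈ s, 0 ≤ p l) :
    ∑ l ∈ s, negMulLog (p l) ≤ negMulLog (∑ l ∈ s, p l) + (∑ l ∈ s, p l) * log s.card := by
  rcases s.eq_empty_or_nonempty with rfl | hs
  · simp
  set n : ℝ := (s.card : ℝ)
  have hn : 0 < n := by simpa [n] using hs.card_pos
  have jensen := concaveOn_negMulLog.le_map_sum (t := s) (w := fun _ => n⁻¹) (p := p)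
    (fun _ _ => by positivity) (by simp [n, hn.ne']) hp
  rw [← Finset.smul_sum, ← Finset.smul_sum, smul_eq_mul, smul_eq_mul, negMulLog_mul] at jensen
  have hinv : negMulLog n⁻¹ = n⁻¹ * log n := by simp [negMulLog, log_inv]
  rw [hinv] at jensen
  calc ∑ l ∈ s, negMulLog (p l) = n * (n⁻¹ * ∑ l ∈ s, negMulLog (p l)) := by field_simp
    _ ≤ n * ((∑ l ∈ s, p l) * (n⁻¹ * log n) + n⁻¹ * negMulLog (∑ l ∈ s, p l)) := by gcongr
    _ = _ := by field_simp; ring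

theorem mul_qaryEntropy_div {q S : ℝ} (hq : 0 ≤ q) (hqS : q ≤ S) (n : ℕ) :
    S * qaryEntropy n (q / S) =
      negMulLog q + negMulLog (S - q) - negMulLog S + q * log (n - 1 : ℤ) := by
  rcases eq_or_lt_of_le (hq.trans hqS) with rfl | hS
  · obtain rfl : q = 0 := le_antisymm hqS hq
    simp
  set x := q / S
  have hq' : q = S * x := (mul_div_cancel₀ q hS.ne').symm
  rw [qaryEntropy, binEntropy_eq_negMulLog_add_negMulLog_one_sub, hq', ← mul_one_sub,
    negMulLog_mul, negMulLog_mul]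
  ring

theorem sum_negMulLog_sub_negMulLog_sum_le {ι : Type*} [Fintype ι] {p : ι → ℝ}
    (hp : ∀ l, 0 ≤ p l) (i : ι) :
    ∑ l, negMulLog (p l) - negMulLog (∑ l, p l) ≤
      (∑ l, p l) * qaryEntropy (Fintype.card ι) ((∑ l, p l - p i) / ∑ l, p l) := by
  classical
  set S := ∑ l, p l
  have hrest : ∑ l ∈ Finset.univ.erase i, p l = S - p i :=
    eq_sub_of_add_eq (Finset.sum_erase_add _ _ (Finset.mem_univ i))
  have hcard : ((Finset.univ.erase i).card : ℝ) = ((Fintype.card ι - 1 : ℤ) : ℝ) := by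
    rw [Finset.card_erase_of_mem (Finset.mem_univ i), Finset.card_univ,
      Nat.cast_sub (Fintype.card_pos_iff.2 ⟨i⟩)]
    push_cast
    rfl
  have hothers := sum_negMulLog_le_negMulLog_sum_add_mul_log_card (Finset.univ.erase i)
    (fun l _ => hp l)
  rw [hrest, hcard] at hothers
  rw [mul_qaryEntropy_div (sub_nonneg.2 (Finset.single_le_sum (fun l _ => hp l)
    (Finset.mem_univ i))) (sub_le_self _ (hp i)), sub_sub_cancel,
    ← Finset.add_sum_erase _ _ (Finset.mem_univ i)]
  linarith

theorem sum_sum_negMulLog_sub_le_qaryEntropy {ι κ : Type*} [Fintype ι] [Fintype κ]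
    {p : ι → κ → ℝ} (hp : ∀ l b, 0 ≤ p l b) (htot : ∑ b, ∑ l, p l b = 1) (I : κ → ι) :
    ∑ b, (∑ l, negMulLog (p l b) - negMulLog (∑ l, p l b)) ≤
      qaryEntropy (Fintype.card ι) (∑ b, (∑ l, p l b - p (I b) b)) := by
  set w : κ → ℝ := fun b => ∑ l, p l b
  set e : κ → ℝ := fun b => w b - p (I b) b
  have hw : ∀ b, 0 ≤ w b := fun b => Finset.sum_nonneg fun l _ => hp l b
  have he : ∀ b, 0 ≤ e b := fun b =>
    sub_nonneg.2 (Finset.single_le_sum (fun l _ => hp l b) (Finset.mem_univ _))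
  have hew : ∀ b, e b ≤ w b := fun b => sub_le_self _ (hp _ b)
  have hmem : ∀ b ∈ Finset.univ, e b / w b ∈ Set.Icc (0 : ℝ) 1 := fun b _ =>
    ⟨div_nonneg (he b) (hw b), div_le_one_of_le₀ (hew b) (hw b)⟩
  have jensen := (strictConcaveOn_qaryEntropy (q := Fintype.card ι)).concaveOn.le_map_sum
    (fun b _ => hw b) htot hmem
  have hcancel : ∀ b, w b * (e b / w b) = e b := fun b =>
    mul_div_cancel_of_imp' fun h => le_antisymm (h ▸ hew b) (he b)
  simp only [smul_eq_mul, hcancel] at jensen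
  exact (Finset.sum_le_sum fun b _ => sum_negMulLog_sub_negMulLog_sum_le (hp · b) (I b)).trans
    jensen

theorem IsPart.preimage {X Y ι : Type*} [MeasurableSpace X] [MeasurableSpace Y]
    {α : ι → Set Y} (hα : IsPart α) {f : X → Y} (hf : Measurable f) :
    IsPart fun i => f ⁻¹' α i :=
  ⟨fun i => hf (hα.1 i), fun i j hij => (hα.2.1 i j hij).preimage f,
    by rw [← preimage_iUnion, hα.2.2, preimage_univ]⟩

theorem IsPart.sum_measureReal_inter {X ι : Type*} [MeasurableSpace X] [Fintype ι]
    {γ : ι → Set X} (hγ : IsPart γ) (μ : Measure X) [IsFiniteMeasure μ] {B : Set X}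
    (hB : MeasurableSet B) :
    ∑ l, μ.real (γ l ∩ B) = μ.real B := by
  rw [← measureReal_iUnion_fintype
    (fun l l' h => (hγ.2.1 l l' h).mono inter_subset_left inter_subset_left)
    (fun l => (hγ.1 l).inter hB), ← iUnion_inter, hγ.2.2, univ_inter]

/-- Fano's inequality: `I` guesses the `γ`-cell from the `β`-cell, with error probability
`∑ b, μ.real (β b \ γ (I b))`. -/
theorem condEnt_le_qaryEntropy {X ι κ : Type*} [MeasurableSpace X] [Fintype ι] [Fintype κ]
    (μ : Measure X) [IsProbabilityMeasure μ] {γ : ι → Set X} {β : κ → Set X}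
    (hγ : IsPart γ) (hβ : IsPart β) (I : κ → ι) :
    condEnt μ γ β ≤ qaryEntropy (Fintype.card ι) (∑ b, μ.real (β b \ γ (I b))) := by
  have hcol : ∀ b, ∑ l, μ.real (γ l ∩ β b) = μ.real (β b) :=
    fun b => hγ.sum_measureReal_inter μ (hβ.1 b)
  have htot : ∑ b, ∑ l, μ.real (γ l ∩ β b) = 1 := by
    simp_rw [hcol]
    rw [← measureReal_iUnion_fintype hβ.2.1 hβ.1, hβ.2.2, probReal_univ]
  have hmiss : ∀ b, μ.real (β b \ γ (I b)) =
      ∑ l, μ.real (γ l ∩ β b) - μ.real (γ (I b) ∩ β b) := fun b => by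
    rw [hcol, ← measureReal_inter_add_sdiff (hγ.1 (I b)) (s := β b), inter_comm]
    ring
  have hcond : condEnt μ γ β = ∑ b,
      (∑ l, negMulLog (μ.real (γ l ∩ β b)) - negMulLog (∑ l, μ.real (γ l ∩ β b))) := by
    simp_rw [hcol]
    rw [condEnt, entH, entH, Fintype.sum_prod_type, Finset.sum_comm, ← Finset.sum_sub_distrib]
    rfl
  rw [hcond]
  simp_rw [hmiss]
  exact sum_sum_negMulLog_sub_le_qaryEntropy (fun _ _ => measureReal_nonneg) htot I

theorem sum_measureReal_sdiff_le_measureReal_iUnion_sdiff {X ι κ : Type*} [MeasurableSpace X]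
    [Fintype κ] (μ : Measure X) [IsFiniteMeasure μ] {β : κ → Set X}
    (hβm : ∀ b, MeasurableSet (β b)) (hβd : Pairwise (Disjoint on β)) {γ W : ι → Set X}
    (hγ : ∀ i, MeasurableSet (γ i)) {I : κ → ι} (hI : ∀ b, β b ⊆ W (I b)) :
    ∑ b, μ.real (β b \ γ (I b)) ≤ μ.real (⋃ i, W i \ γ i) := by
  rw [← measureReal_iUnion_fintype (fun b b' h => (hβd h).mono sdiff_subset sdiff_subset)
    (fun b => (hβm b).diff (hγ (I b)))]
  exact measureReal_mono (iUnion_subset fun b =>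
    (sdiff_subset_sdiff_left (hI b)).trans (subset_iUnion (fun i => W i \ γ i) (I b)))

theorem exists_isOpen_superset_measure_iUnion_sdiff_lt {Y ι : Type*} [TopologicalSpace Y]
    [MeasurableSpace Y] [Countable ι] (ν : Measure Y) [ν.OuterRegular] [IsFiniteMeasure ν]
    {A : ι → Set Y} (hA : ∀ i, MeasurableSet (A i)) {η : ℝ≥0∞} (hη : η ≠ 0) :
    ∃ U : ι → Set Y, (∀ i, A i ⊆ U i) ∧ (∀ i, IsOpen (U i)) ∧ ν (⋃ i, U i \ A i) < η := by
  obtain ⟨η', hη'pos, hη'sum⟩ := ENNReal.exists_pos_sum_of_countable' hη ι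
  choose U hAU hU _ hUA using fun i =>
    (hA i).exists_isOpen_sdiff_lt (measure_ne_top ν _) (hη'pos i).ne'
  refine ⟨U, hAU, hU, ?_⟩
  calc ν (⋃ i, U i \ A i) ≤ ∑' i, ν (U i \ A i) := measure_iUnion_le _
    _ ≤ ∑' i, η' i := ENNReal.tsum_le_tsum fun i => (hUA i).le
    _ < η := hη'sum

end

theorem factor_partition_cover_conditional_entropy_general
    (X Y : Type) [MetricSpace X] [MetricSpace Y]
    [MeasurableSpace X] [BorelSpace X] [MeasurableSpace Y] [BorelSpace Y]
    (T : X → X) (hT : Continuous T)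
    (π : X → Y) (hπc : Continuous π)
    (μ : Measure X) [IsProbabilityMeasure μ] (hμ : μ.map T = μ)
    (m : ℕ) (α : Fin m → Set Y) (hα : IsPart α) (ε : ℝ) (hε : 0 < ε) :
    ∃ U : Fin m → Set Y, (∀ i, IsOpen (U i)) ∧ (⋃ i, U i) = Set.univ ∧
      ∀ (j : ℕ) (d : ℕ) (β : Fin d → Set X), IsPart β →
        (∀ b : Fin d, ∃ i : Fin m, β b ⊆ T^[j] ⁻¹' (π ⁻¹' U i)) →
        condEnt μ (fun i : Fin m => T^[j] ⁻¹' (π ⁻¹' α i)) β < ε := by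
  obtain ⟨δ, hδ, hsmall⟩ : ∃ δ > 0, ∀ {t : ℝ}, dist t 0 < δ → Real.qaryEntropy m t < ε :=
    Metric.eventually_nhds_iff.1 <|
      (Real.qaryEntropy_continuous.tendsto 0).eventually (gt_mem_nhds (by simpa using hε))
  obtain ⟨U, hαU, hU, hUα⟩ := exists_isOpen_superset_measure_iUnion_sdiff_lt (μ.map π) hα.1
    (ENNReal.ofReal_pos.2 hδ).ne'
  refine ⟨U, hU, eq_univ_of_univ_subset (hα.2.2 ▸ iUnion_mono hαU), fun j d β hβ hβU => ?_⟩
  choose I hI using hβU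
  have hmeas : MeasurableSet (⋃ i, U i \ α i) :=
    .iUnion fun i => (hU i).measurableSet.diff (hα.1 i)
  have hmiss : ∑ b, μ.real (β b \ T^[j] ⁻¹' (π ⁻¹' α (I b))) < δ :=
    calc ∑ b, μ.real (β b \ T^[j] ⁻¹' (π ⁻¹' α (I b)))
        ≤ μ.real (⋃ i, T^[j] ⁻¹' (π ⁻¹' U i) \ T^[j] ⁻¹' (π ⁻¹' α i)) :=
          sum_measureReal_sdiff_le_measureReal_iUnion_sdiff μ hβ.1 hβ.2.1
            (fun i => hπc.measurable.comp (hT.measurable.iterate j) (hα.1 i)) hI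
      _ = (μ.map π).real (⋃ i, U i \ α i) := by
          rw [map_measureReal_apply hπc.measurable hmeas,
            ← ((MeasurePreserving.mk hT.measurable hμ).iterate j).measureReal_preimage
              (hπc.measurable hmeas).nullMeasurableSet]
          simp only [preimage_iUnion, preimage_sdiff]
      _ < δ := ENNReal.toReal_lt_of_lt_ofReal hUα
  refine (condEnt_le_qaryEntropy μ (hα.preimage (hπc.measurable.comp
    (hT.measurable.iterate j))) hβ I).trans_lt ?_
  rw [Fintype.card_fin]
  exact hsmall (by rwa [Real.dist_eq, sub_zero,
    abs_of_nonneg (Finset.sum_nonneg fun b _ => measureReal_nonneg)])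

/-- Given a factor map `π : (X,T) → (Y,S)`, `μ ∈ M(X,T)`, a finite Borel
partition `α = {A_1,…,A_k}` of `Y` and `ε > 0`, there is an open cover `𝒰` of `Y` with `k`
elements such that `H_μ(T^{-j}π^{-1}α | β) < ε` for every `j ≥ 0` and every finite Borel
partition `β` of `X` refining `T^{-j}π^{-1}𝒰`. -/
theorem factor_partition_cover_conditional_entropy
    (X Y : Type) [MetricSpace X] [CompactSpace X] [MetricSpace Y] [CompactSpace Y]
    [MeasurableSpace X] [BorelSpace X] [MeasurableSpace Y] [BorelSpace Y]
    (T : X → X) (hT : Continuous T) (S : Y → Y) (hS : Continuous S)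
    (π : X → Y) (hπc : Continuous π) (hπs : Function.Surjective π) (hπe : π ∘ T = S ∘ π)
    (μ : Measure X) [IsProbabilityMeasure μ] (hμ : μ.map T = μ)
    (m : ℕ) (α : Fin m → Set Y) (hα : IsPart α) (ε : ℝ) (hε : 0 < ε) :
    ∃ U : Fin m → Set Y, (∀ i, IsOpen (U i)) ∧ (⋃ i, U i) = Set.univ ∧
      ∀ (j : ℕ) (d : ℕ) (β : Fin d → Set X), IsPart β →
        (∀ b : Fin d, ∃ i : Fin m, β b ⊆ T^[j] ⁻¹' (π ⁻¹' U i)) →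
        condEnt μ (fun i : Fin m => T^[j] ⁻¹' (π ⁻¹' α i)) β < ε :=
  factor_partition_cover_conditional_entropy_general X Y T hT π hπc μ hμ m α hα ε hε

end WTP
end

section
/- Let Z ⊆ X_1, f ∈ C(X_1,ℝ), ε > 0, and let U_i be open covers of X_i with Lebesgue numbers ε_i, i=1,…,k. Then: (i) if ε < min_i ε_i / 2, then P^a(T_1, Z, {U_i}_{i=1}^k, f) ≤ P^a(T_1, Z, ε, f); (ii) if max_{1≤i≤k} diam U_i < ε, then P^a(T_1, Z, ε, f) ≤ P^a(T_1, Z, {U_i}_{i=1}^k, f). -/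
/-!
Both inequalities compare the admissible sets of the two Carathéodory constructions. If `ε` is
below every Lebesgue number, each weighted Bowen ball `B_n^𝐚(x, ε)` lies in an element of the
joined cover of level `n`; if every element of every `𝒰_i` has diameter below `ε`, each element of
the joined cover lies in the Bowen ball around any of its points. So covers of one kind are covers
of the other kind with the same sums, the `Λ`'s compare, and so do their critical exponents.
-/

open MeasureTheory Set Filter Topology
open scoped ENNReal symmDiff

namespace WTP

variable {k : ℕ}

section Comparison

variable {X1 : Type*} {T1 : X1 → X1}

noncomputable def carLamN [MeasurableSpace X1] (T1 : X1 → X1) (f : X1 → ℝ) (a1 s : ℝ)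
    (adm : ℕ → Set X1 → Prop) (N : ℕ) (Z : Set X1) : ℝ≥0∞ :=
  ⨅ (D : Set (ℕ × Set X1)) (_ : D.Countable)
    (_ : ∀ p ∈ D, N ≤ p.1 ∧ MeasurableSet p.2 ∧ adm p.1 p.2)
    (_ : Z ⊆ ⋃ p ∈ D, p.2),
    ∑' p : D, pterm T1 f a1 s p.1.1 p.1.2

/-- Empty pieces may be dropped from a cover, so admissibility only matters for nonempty sets. -/
theorem carLamN_le_carLamN_of_imp [MeasurableSpace X1] {f : X1 → ℝ} {a1 s : ℝ}
    {adm adm' : ℕ → Set X1 → Prop} {N : ℕ} {Z : Set X1}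
    (h : ∀ n B, B.Nonempty → adm n B → adm' n B) :
    carLamN T1 f a1 s adm' N Z ≤ carLamN T1 f a1 s adm N Z := by
  unfold carLamN
  refine le_iInf fun D => le_iInf fun hD => le_iInf fun hadm => le_iInf fun hZ => ?_
  refine iInf_le_of_le {p ∈ D | p.2.Nonempty} <| iInf_le_of_le (hD.mono (sep_subset _ _)) <|
    iInf_le_of_le ?_ <| iInf_le_of_le ?_ <|
    ENNReal.tsum_mono_subtype (fun p : ℕ × Set X1 => pterm T1 f a1 s p.1 p.2) (sep_subset D _)
  · rintro p ⟨hp, hne⟩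
    obtain ⟨hN, hm, hp⟩ := hadm p hp
    exact ⟨hN, hm, h _ _ hne hp⟩
  · intro z hz
    obtain ⟨p, hp, hzp⟩ := mem_iUnion₂.1 (hZ hz)
    exact mem_iUnion₂.2 ⟨p, ⟨hp, z, hzp⟩, hzp⟩

theorem sInf_zeroSet_le_of_le {g h : ℝ → ℝ≥0∞} (hgh : g ≤ h) :
    sInf (Real.toEReal '' {s | g s = 0}) ≤ sInf (Real.toEReal '' {s | h s = 0}) :=
  sInf_le_sInf <| image_mono fun s hs => le_antisymm ((hgh s).trans (le_of_eq hs)) bot_le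

variable {X : Fin k → Type*} [∀ i, MetricSpace (X i)] {T : ∀ i, X i → X i}
  {τ : ∀ i, X1 → X i} {a : Fin k → ℝ} {𝒰 : ∀ i, Set (Set (X i))} {ε : ℝ} {n : ℕ}

theorem exists_jointFiber_superset_wBowen (hτ : ∀ i, Function.Semiconj (τ i) T1 (T i))
    {e : Fin k → ℝ} (hleb : ∀ i, ∀ x : X i, ∃ U ∈ 𝒰 i, Metric.ball x (e i) ⊆ U)
    (hε : ∀ i, ε ≤ e i) (x : X1) :
    ∃ A ∈ jointFiber T1 a (fun i => pullCov (τ i) (𝒰 i)) n, wBowen T τ a n x ε ⊆ A := by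
  choose U hU hball using fun i (l : ℕ) => hleb i ((T i)^[l] (τ i x))
  refine ⟨_, ⟨fun i l => τ i ⁻¹' U i l, fun i l _ => mem_image_of_mem _ (hU i l), rfl⟩, ?_⟩
  intro y hy
  simp only [mem_iInter, Finset.mem_range, mem_preimage, (hτ _).iterate_right _ y]
  exact fun i l hl => hball i l (Metric.mem_ball'.2 ((hy i l hl).trans_le (hε i)))

theorem jointFiber_subset_wBowen [∀ i, BoundedSpace (X i)]
    (hτ : ∀ i, Function.Semiconj (τ i) T1 (T i)) (hdiam : ∀ i, ∀ U ∈ 𝒰 i, Metric.diam U < ε)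
    {A : Set X1} (hA : A ∈ jointFiber T1 a (fun i => pullCov (τ i) (𝒰 i)) n) {x : X1}
    (hx : x ∈ A) : A ⊆ wBowen T τ a n x ε := by
  obtain ⟨V, hV, rfl⟩ := hA
  intro y hy i l hl
  obtain ⟨U, hU, hUV : τ i ⁻¹' U = V i l⟩ := hV i l hl
  have hmem : ∀ z ∈ ⋂ i : Fin k, ⋂ l ∈ Finset.range ⌈cw a i * (n : ℝ)⌉₊, T1^[l] ⁻¹' V i l,
      (T i)^[l] (τ i z) ∈ U := fun z hz => by
    rw [← (hτ i).iterate_right l z, ← mem_preimage, hUV]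
    exact mem_iInter₂.1 (mem_iInter.1 hz i) l (Finset.mem_range.2 hl)
  exact (Metric.dist_le_diam_of_mem (Bornology.IsBounded.all U) (hmem x hx) (hmem y hy)).trans_lt
    (hdiam i U hU)

variable [NeZero k] [MeasurableSpace X1] {f : X1 → ℝ} {s : ℝ} {Z : Set X1}
  {𝒱 : Fin k → Set (Set X1)}

theorem lamBowenN_eq_carLamN (N : ℕ) : lamBowenN T1 T τ a f s ε N Z =
    carLamN T1 f (a 0) s (fun n B => ∃ x, B ⊆ wBowen T τ a n x ε) N Z := rfl

theorem lamLocN_eq_carLamN (N : ℕ) : lamLocN T1 a 𝒱 f s N Z =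
    carLamN T1 f (a 0) s (fun n B => ∃ A ∈ jointFiber T1 a 𝒱 n, B ⊆ A) N Z := rfl

theorem lamLoc_le_lamBowen
    (hA : ∀ n x, ∃ A ∈ jointFiber T1 a 𝒱 n, wBowen T τ a n x ε ⊆ A) :
    lamLoc T1 a 𝒱 f s Z ≤ lamBowen T1 T τ a f s ε Z := by
  refine iSup_mono fun N => ?_
  rw [lamLocN_eq_carLamN, lamBowenN_eq_carLamN]
  refine carLamN_le_carLamN_of_imp fun n _ _ ⟨x, hB⟩ => ?_
  obtain ⟨A, hA, hxA⟩ := hA n x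
  exact ⟨A, hA, hB.trans hxA⟩

theorem lamBowen_le_lamLoc
    (hA : ∀ n, ∀ A ∈ jointFiber T1 a 𝒱 n, ∀ x ∈ A, A ⊆ wBowen T τ a n x ε) :
    lamBowen T1 T τ a f s ε Z ≤ lamLoc T1 a 𝒱 f s Z := by
  refine iSup_mono fun N => ?_
  rw [lamLocN_eq_carLamN, lamBowenN_eq_carLamN]
  exact carLamN_le_carLamN_of_imp fun n _ ⟨x, hx⟩ ⟨A, hA', hBA⟩ =>
    ⟨x, hBA.trans (hA n A hA' x (hBA hx))⟩

end Comparison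

theorem local_pressure_vs_scale_pressure_general
    {k : ℕ} [NeZero k]
    (X : Fin k → Type) [∀ i, MetricSpace (X i)] [∀ i, CompactSpace (X i)]
    [∀ i, MeasurableSpace (X i)] (T : ∀ i, X i → X i) (τ : ∀ i, X 0 → X i)
    (hτe : ∀ i, τ i ∘ T 0 = T i ∘ τ i) (a : Fin k → ℝ)
    (Z : Set (X 0)) (f : X 0 → ℝ) (ε : ℝ) (hε : 0 < ε)
    (𝒰 : ∀ i, Set (Set (X i))) (e : Fin k → ℝ)
    (hleb : ∀ i, ∀ x : X i, ∃ U ∈ 𝒰 i, Metric.ball x (e i) ⊆ U) :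
    ((∀ i, ε < e i / 2) →
        PLoc (T 0) a (fun i => pullCov (τ i) (𝒰 i)) Z f ≤ PBowenEps (T 0) T τ a Z f ε)
    ∧ ((∀ i, ∀ U ∈ 𝒰 i, Metric.diam U < ε) →
        PBowenEps (T 0) T τ a Z f ε ≤ PLoc (T 0) a (fun i => pullCov (τ i) (𝒰 i)) Z f) := by
  have hsemi : ∀ i, Function.Semiconj (τ i) (T 0) (T i) := fun i x => congrFun (hτe i) x
  refine ⟨fun hsmall => ?_, fun hdiam => ?_⟩
  · exact sInf_zeroSet_le_of_le fun _ => lamLoc_le_lamBowen fun _ x =>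
      exists_jointFiber_superset_wBowen hsemi hleb (fun i => by linarith [hsmall i]) x
  · exact sInf_zeroSet_le_of_le fun _ => lamBowen_le_lamLoc fun _ _ hA _ hx =>
      jointFiber_subset_wBowen hsemi hdiam hA hx

/-- Comparison between the local weighted pressure for covers `𝒰_i`
(with Lebesgue numbers `e_i`) and the weighted pressure at scale `ε`:
(i) if `ε < min_i e_i / 2` then `P^𝐚(T₁,Z,{𝒰_i},f) ≤ P^𝐚(T₁,Z,ε,f)`;
(ii) if `max_i diam 𝒰_i < ε` then `P^𝐚(T₁,Z,ε,f) ≤ P^𝐚(T₁,Z,{𝒰_i},f)`. -/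
theorem local_pressure_vs_scale_pressure
    {k : ℕ} [NeZero k]
    (X : Fin k → Type) [∀ i, MetricSpace (X i)] [∀ i, CompactSpace (X i)]
    [∀ i, MeasurableSpace (X i)] [∀ i, BorelSpace (X i)]
    (T : ∀ i, X i → X i) (hT : ∀ i, Continuous (T i))
    (τ : ∀ i, X 0 → X i) (hτ0 : τ 0 = id)
    (hτc : ∀ i, Continuous (τ i)) (hτs : ∀ i, Function.Surjective (τ i))
    (hτe : ∀ i, τ i ∘ T 0 = T i ∘ τ i)
    (hchain : ∀ i j : Fin k, i ≤ j → ∃ p : X i → X j,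
        Continuous p ∧ p ∘ T i = T j ∘ p ∧ p ∘ τ i = τ j)
    (a : Fin k → ℝ) (ha1 : 0 < a 0) (ha : ∀ i, 0 ≤ a i)
    (Z : Set (X 0)) (f : X 0 → ℝ) (hf : Continuous f) (ε : ℝ) (hε : 0 < ε)
    (𝒰 : ∀ i, Set (Set (X i))) (h𝒰 : ∀ i, IsOpenCover (𝒰 i))
    (e : Fin k → ℝ) (hepos : ∀ i, 0 < e i)
    (hleb : ∀ i, ∀ x : X i, ∃ U ∈ 𝒰 i, Metric.ball x (e i) ⊆ U) :
    ((∀ i, ε < e i / 2) →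
        PLoc (T 0) a (fun i => pullCov (τ i) (𝒰 i)) Z f ≤ PBowenEps (T 0) T τ a Z f ε)
    ∧ ((∀ i, ∀ U ∈ 𝒰 i, Metric.diam U < ε) →
        PBowenEps (T 0) T τ a Z f ε ≤ PLoc (T 0) a (fun i => pullCov (τ i) (𝒰 i)) Z f) :=
  local_pressure_vs_scale_pressure_general X T τ hτe a Z f ε hε 𝒰 e hleb

end WTP
end
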